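/- For the 2×2 linear recurrence [e_{k+1}; I_{k+1}] = [[a, −b],[a, 1−b]]·[e_k; I_k] with a = 1 − C·K_p, b = C·K_i, if a² < 1 − b and 0 < b < 1, then the Lyapunov function V_k = e_k² + (b/(1−b))·I_k² is strictly decreasing along nonzero trajectories, with V_{k+1} − V_k = (1/(1−b))·[e_k²(a² − (1−b)) − b²·I_k²]. -/

import Mathlib

/-! The weight `b / (1 - b)` is chosen so that the cross terms in `e I` cancel in `V (k + 1) - V k`;
what remains is a diagonal quadratic form with negative coefficients `a² - (1 - b)` and `-b²`. -/

theorem lyapunov_step_sub {K : Type*} [Field K] {a b : K} (hb : 1 - b ≠ 0) (e i : K) :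
    (a * e - b * i) ^ 2 + b / (1 - b) * (a * e + (1 - b) * i) ^ 2 - (e ^ 2 + b / (1 - b) * i ^ 2)
      = 1 / (1 - b) * (e ^ 2 * (a ^ 2 - (1 - b)) - b ^ 2 * i ^ 2) := by
  field_simp
  ring

theorem sq_mul_sub_mul_sq_neg {K : Type*} [Field K] [LinearOrder K] [IsStrictOrderedRing K]
    {c d x y : K} (hc : c < 0) (hd : 0 < d) (hxy : (x, y) ≠ (0, 0)) :
    x ^ 2 * c - d * y ^ 2 < 0 := by
  rcases eq_or_ne x 0 with rfl | hx
  · have hy : y ≠ 0 := fun hy => hxy (by rw [hy])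
    rw [zero_pow two_ne_zero, zero_mul, zero_sub, neg_neg_iff_pos]
    positivity
  · have : 0 < x ^ 2 := by positivity
    nlinarith [mul_nonneg hd.le (sq_nonneg y)]

theorem stmt_8_general (a b : ℝ)
    (hstab : a ^ 2 < 1 - b) (hb' : 0 < b ∧ b < 1)
    (e I : ℕ → ℝ)
    (hrec_e : ∀ k, e (k + 1) = a * e k - b * I k)
    (hrec_I : ∀ k, I (k + 1) = a * e k + (1 - b) * I k)
    (V : ℕ → ℝ) (hV : ∀ k, V k = (e k) ^ 2 + (b / (1 - b)) * (I k) ^ 2) :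
    (∀ k, V (k + 1) - V k
        = (1 / (1 - b)) * ((e k) ^ 2 * (a ^ 2 - (1 - b)) - b ^ 2 * (I k) ^ 2)) ∧
    (∀ k, (e k, I k) ≠ (0, 0) → V (k + 1) < V k) := by
  obtain ⟨hb0, hb1⟩ := hb'
  have hdiff : ∀ k, V (k + 1) - V k
      = 1 / (1 - b) * ((e k) ^ 2 * (a ^ 2 - (1 - b)) - b ^ 2 * (I k) ^ 2) := fun k => by
    rw [hV, hV, hrec_e, hrec_I]
    exact lyapunov_step_sub (sub_ne_zero.2 hb1.ne') _ _
  refine ⟨hdiff, fun k hne => ?_⟩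
  have hneg : V (k + 1) - V k < 0 := by
    rw [hdiff k]
    exact mul_neg_of_pos_of_neg (one_div_pos.2 (sub_pos.2 hb1))
      (sq_mul_sub_mul_sq_neg (sub_neg.2 hstab) (pow_pos hb0 2) hne)
  linarith

theorem stmt_8 (C Kp Ki : ℝ) (hC : 0 < C) (hKp : 0 < Kp) (hKi : 0 < Ki)
    (a b : ℝ) (ha : a = 1 - C * Kp) (hb : b = C * Ki)
    (hstab : a ^ 2 < 1 - b) (hb' : 0 < b ∧ b < 1)
    (e I : ℕ → ℝ)
    (hrec_e : ∀ k, e (k + 1) = a * e k - b * I k)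
    (hrec_I : ∀ k, I (k + 1) = a * e k + (1 - b) * I k)
    (V : ℕ → ℝ) (hV : ∀ k, V k = (e k) ^ 2 + (b / (1 - b)) * (I k) ^ 2) :
    (∀ k, V (k + 1) - V k
        = (1 / (1 - b)) * ((e k) ^ 2 * (a ^ 2 - (1 - b)) - b ^ 2 * (I k) ^ 2)) ∧
    (∀ k, (e k, I k) ≠ (0, 0) → V (k + 1) < V k) :=
  stmt_8_general a b hstab hb' e I hrec_e hrec_I V hV
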